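/- arXiv:2208.05831 — 3 statements merged into one kernel-verified Lean document; each statement's English description precedes it below -/
import Mathlib

section
/- For all integers i, b with 1 ≤ i ≤ b-2 and b ≤ N+1, one has e_i f_{i,b} - f_{i,b} e_i = q f_{i+1,b} k_i² in U. -/
noncomputable section

open FreeAlgebra

/-- `𝕜 = F(q)`, the field of rational functions over `F`. -/
abbrev kk (F : Type) [Field F] : Type := RatFunc F

/-- The variable `q`. -/
def qq (F : Type) [Field F] : kk F := RatFunc.X

/-- `v = q²`. -/
def vv (F : Type) [Field F] : kk F := qq F ^ 2

/-- The balanced quantum integer `[n]_v`. -/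
def qint (F : Type) [Field F] (n : ℤ) : kk F :=
  (vv F ^ n - vv F ^ (-n)) / (vv F - (vv F)⁻¹)

/-- The quantum factorial `[m]_v!`. -/
def qfact (F : Type) [Field F] (m : ℕ) : kk F :=
  ∏ j ∈ Finset.Icc 1 m, qint F j

/-- The balanced Gaussian binomial coefficient `C(n,i)_v`. -/
def qbinom (F : Type) [Field F] (n i : ℕ) : kk F :=
  qfact F n / (qfact F i * qfact F (n - i))

/-- The Cartan matrix of `sl(N+1)`, with 1-based indices. -/
def cartan (i j : ℕ) : ℤ :=
  if i = j then 2 else if i + 1 = j ∨ j + 1 = i then -1 else 0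

/-- Generators of `U_q(sl(N+1))`: `e i`, `f i`, `k i`, `kinv i` (0-based `i : Fin N`,
corresponding to the 1-based index `i+1`). -/
inductive Gen (N : ℕ) : Type
  | e : Fin N → Gen N
  | f : Fin N → Gen N
  | k : Fin N → Gen N
  | kinv : Fin N → Gen N

/-- The defining relations of `U_q(sl(N+1))`. -/
inductive UqRel (F : Type) [Field F] (N : ℕ) :
    FreeAlgebra (kk F) (Gen N) → FreeAlgebra (kk F) (Gen N) → Prop
  | kkinv (i : Fin N) : UqRel F N (ι (kk F) (Gen.k i) * ι (kk F) (Gen.kinv i)) 1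
  | kinvk (i : Fin N) : UqRel F N (ι (kk F) (Gen.kinv i) * ι (kk F) (Gen.k i)) 1
  | kcomm (i j : Fin N) :
      UqRel F N (ι (kk F) (Gen.k i) * ι (kk F) (Gen.k j))
        (ι (kk F) (Gen.k j) * ι (kk F) (Gen.k i))
  | ke (i j : Fin N) :
      UqRel F N (ι (kk F) (Gen.k i) * ι (kk F) (Gen.e j) * ι (kk F) (Gen.kinv i))
        ((qq F ^ cartan ((i : ℕ) + 1) ((j : ℕ) + 1)) • ι (kk F) (Gen.e j))
  | kf (i j : Fin N) :
      UqRel F N (ι (kk F) (Gen.k i) * ι (kk F) (Gen.f j) * ι (kk F) (Gen.kinv i))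
        ((qq F ^ (-cartan ((i : ℕ) + 1) ((j : ℕ) + 1))) • ι (kk F) (Gen.f j))
  | ef (i j : Fin N) :
      UqRel F N (ι (kk F) (Gen.e i) * ι (kk F) (Gen.f j) - ι (kk F) (Gen.f j) * ι (kk F) (Gen.e i))
        (if i = j then
          ((qq F ^ 2 - qq F ^ (-2 : ℤ))⁻¹) •
            ((ι (kk F) (Gen.k i)) ^ 2 - (ι (kk F) (Gen.kinv i)) ^ 2)
        else 0)
  | serre_e_near (i j : Fin N) (h : (i : ℕ) + 1 = j ∨ (j : ℕ) + 1 = i) :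
      UqRel F N
        ((ι (kk F) (Gen.e i)) ^ 2 * ι (kk F) (Gen.e j)
          - (qq F ^ 2 + qq F ^ (-2 : ℤ)) •
              (ι (kk F) (Gen.e i) * ι (kk F) (Gen.e j) * ι (kk F) (Gen.e i))
          + ι (kk F) (Gen.e j) * (ι (kk F) (Gen.e i)) ^ 2) 0
  | serre_f_near (i j : Fin N) (h : (i : ℕ) + 1 = j ∨ (j : ℕ) + 1 = i) :
      UqRel F N
        ((ι (kk F) (Gen.f i)) ^ 2 * ι (kk F) (Gen.f j)
          - (qq F ^ 2 + qq F ^ (-2 : ℤ)) •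
              (ι (kk F) (Gen.f i) * ι (kk F) (Gen.f j) * ι (kk F) (Gen.f i))
          + ι (kk F) (Gen.f j) * (ι (kk F) (Gen.f i)) ^ 2) 0
  | serre_e_far (i j : Fin N) (h : (i : ℕ) + 1 < j ∨ (j : ℕ) + 1 < i) :
      UqRel F N (ι (kk F) (Gen.e i) * ι (kk F) (Gen.e j))
        (ι (kk F) (Gen.e j) * ι (kk F) (Gen.e i))
  | serre_f_far (i j : Fin N) (h : (i : ℕ) + 1 < j ∨ (j : ℕ) + 1 < i) :
      UqRel F N (ι (kk F) (Gen.f i) * ι (kk F) (Gen.f j))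
        (ι (kk F) (Gen.f j) * ι (kk F) (Gen.f i))

/-- The quantized enveloping algebra `U = U_q(sl(N+1))`. -/
abbrev Uq (F : Type) [Field F] (N : ℕ) : Type := RingQuot (UqRel F N)

variable (F : Type) [Field F] (N : ℕ)

/-- The image of a generator in `U`. -/
def gen (g : Gen N) : Uq F N := RingQuot.mkAlgHom (kk F) (UqRel F N) (ι (kk F) g)

/-- `e_i` (1-based index `1 ≤ i ≤ N`; junk value `0` outside this range). -/
def egen (i : ℕ) : Uq F N :=
  if h : 1 ≤ i ∧ i ≤ N then gen F N (Gen.e ⟨i - 1, by omega⟩) else 0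

/-- `f_i` (1-based index). -/
def fgen (i : ℕ) : Uq F N :=
  if h : 1 ≤ i ∧ i ≤ N then gen F N (Gen.f ⟨i - 1, by omega⟩) else 0

/-- `k_i` (1-based index). -/
def kgen (i : ℕ) : Uq F N :=
  if h : 1 ≤ i ∧ i ≤ N then gen F N (Gen.k ⟨i - 1, by omega⟩) else 0

/-- `k_i⁻¹` (1-based index). -/
def kinvgen (i : ℕ) : Uq F N :=
  if h : 1 ≤ i ∧ i ≤ N then gen F N (Gen.kinv ⟨i - 1, by omega⟩) else 0

/-- Auxiliary recursion: `fword i d = f_{i, i+1+d}`. -/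
def fword (i : ℕ) : ℕ → Uq F N
  | 0 => fgen F N i
  | d + 1 =>
      qq F • (fword i d * fgen F N (i + 1 + d)) -
        (qq F)⁻¹ • (fgen F N (i + 1 + d) * fword i d)

/-- The quantum root vector `f_{i,j}` (for `1 ≤ i < j ≤ N+1`). -/
def fij (i j : ℕ) : Uq F N := fword F N i (j - i - 1)

/-- Product of `f_{a,b}` over successive entries of a list. -/
def fList : List ℕ → Uq F N
  | a :: b :: rest => fij F N a b * fList (b :: rest)
  | _ => 1

/-- `f_S` for a finite set `S` of indices. -/
def fSet (S : Finset ℕ) : Uq F N := fList F N (S.sort (· ≤ ·))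

/-- The index set `𝕀` of subsets of `{1,…,N+1}` containing `1` and `N+1`. -/
def II : Finset (Finset ℕ) :=
  (Finset.Icc 1 (N + 1)).powerset.filter fun I => 1 ∈ I ∧ N + 1 ∈ I

/-- `r(I) = {s - 1 : s ∈ {1,…,N+1} \ I}`. -/
def rSet (I : Finset ℕ) : Finset ℕ := (Finset.Icc 1 (N + 1) \ I).image (· - 1)

/-- `k_{σ_i} = k_1 ⋯ k_i`. -/
def kσ (i : ℕ) : Uq F N := ((List.range i).map fun j => kgen F N (j + 1)).prod

/-- `K_{σ_i} = k_{σ_i}²`. -/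
def Kσ (i : ℕ) : Uq F N := kσ F N i ^ 2

/-- `k_{σ_i}⁻¹ = k_1⁻¹ ⋯ k_i⁻¹`. -/
def kσinv (i : ℕ) : Uq F N := ((List.range i).map fun j => kinvgen F N (j + 1)).prod

/-- `K_{σ_i}⁻¹`. -/
def KσInv (i : ℕ) : Uq F N := kσinv F N i ^ 2

/-- The element `h_i = -q⁻¹ v^{-(i-1)} K_{σ_i}⁻¹ (K_{σ_i} v^i - K_{σ_i}⁻¹ v^{-i})/(v - v⁻¹) ∈ U`. -/
def hElt (i : ℕ) : Uq F N :=
  (-(qq F)⁻¹ * vv F ^ (1 - (i : ℤ)) * (vv F - (vv F)⁻¹)⁻¹) •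
    (KσInv F N i * (vv F ^ (i : ℤ) • Kσ F N i - vv F ^ (-(i : ℤ)) • KσInv F N i))

/-- `H_I = ∏_{i ∈ r(I)} h_i` (product taken in increasing order of indices). -/
def HI (I : Finset ℕ) : Uq F N := (((rSet N I).sort (· ≤ ·)).map (hElt F N)).prod

/-- A weight `λ` is recorded by its values `(λ, α_j)` for `1 ≤ j ≤ N`;
`pairσ lam i = (λ, σ_i) = (λ, α_1 + ⋯ + α_i)`. -/
def pairσ (lam : ℕ → ℤ) (i : ℕ) : ℤ := ∑ j ∈ Finset.Icc 1 i, lam j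

/-- The scalar `h_i(λ) = -q⁻¹ v^{-((λ,σ_i)+i-1)} [(λ,σ_i)+i]_v`. -/
def hval (lam : ℕ → ℤ) (i : ℕ) : kk F :=
  -(qq F)⁻¹ * vv F ^ (-(pairσ lam i + (i : ℤ) - 1)) * qint F (pairσ lam i + (i : ℤ))

/-- The scalar `H_I(λ) = ∏_{i ∈ r(I)} h_i(λ)`. -/
def HIval (lam : ℕ → ℤ) (I : Finset ℕ) : kk F := ∏ i ∈ rSet N I, hval F lam i

/-- The left ideal `J_λ` of `U` generated by `e_1, …, e_N` and the `k_j - q^{(λ,α_j)}`. -/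
def vermaIdeal (lam : ℕ → ℤ) : Submodule (Uq F N) (Uq F N) :=
  Submodule.span (Uq F N)
    ({x | ∃ j, 1 ≤ j ∧ j ≤ N ∧ x = egen F N j} ∪
      {x | ∃ j, 1 ≤ j ∧ j ≤ N ∧
        x = kgen F N j - algebraMap (kk F) (Uq F N) (qq F ^ lam j)})

/-- The Verma module `M(λ) = U/J_λ`. -/
abbrev Verma (lam : ℕ → ℤ) : Type := Uq F N ⧸ vermaIdeal F N lam

/-- The highest weight vector `v_λ`, the image of `1` in `M(λ)`. -/
def hw (lam : ℕ → ℤ) : Verma F N lam := Submodule.Quotient.mk 1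

/-- The candidate Shapovalov element `Θ_η = Σ_{I ∈ 𝕀} f_I H_I`. -/
def Theta : Uq F N := ∑ I ∈ II N, fSet F N I * HI F N I

/-- `D^n(λ)`: the `(n-1) × (n-1)` matrix over `U` with `(i,j)` entry (1-based)
`f_{i,j+1}` if `i ≤ j`, `-h_j(λ)·1` if `i = j+1`, and `0` otherwise. -/
def Dmat (lam : ℕ → ℤ) (n : ℕ) : Matrix (Fin (n - 1)) (Fin (n - 1)) (Uq F N) :=
  Matrix.of fun i j =>
    if (i : ℕ) ≤ (j : ℕ) then fij F N ((i : ℕ) + 1) ((j : ℕ) + 2)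
    else if (i : ℕ) = (j : ℕ) + 1 then
      -(algebraMap (kk F) (Uq F N) (hval F lam ((j : ℕ) + 1)))
    else 0

/-- The left-to-right determinant of a matrix with noncommutative entries. -/
def ldet {m : ℕ} (B : Matrix (Fin m) (Fin m) (Uq F N)) : Uq F N :=
  ∑ w : Equiv.Perm (Fin m),
    ((Equiv.Perm.sign w : ℤˣ) : ℤ) • ((List.finRange m).map fun j => B (w j) j).prod

end

/-!
Write `⁅x, y⁆ = x y - y x` and `f_{i,j+1} = q f_{i,j} f_j - q⁻¹ f_j f_{i,j}`. Since `⁅e_i, -⁆` is a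
derivation, it distributes over this `q`-commutator. For `j ≥ i + 2` both `e_i` and `k_i²` commute
with `f_j`, which is the induction step on `j`. In the base case `j = i + 2` one uses
`⁅e_i, f_i⁆ = (k_i² - k_i⁻²)/(q² - q⁻²)` and `k_i^{±2} f_{i+1} = q^{±2} f_{i+1} k_i^{±2}`: the `k_i⁻²`
terms cancel and the `k_i²` term has coefficient `(q³ - q⁻¹)/(q² - q⁻²) = q`.
-/

def qComm {S R : Type*} [Field S] [Ring R] [Algebra S R] (q : S) (X B : R) : R :=
  q • (X * B) - q⁻¹ • (B * X)

section QComm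

variable {S R : Type*} [Field S] [Ring R] [Algebra S R]

theorem lie_qComm (q : S) (E X B : R) :
    ⁅E, qComm q X B⁆ = qComm q ⁅E, X⁆ B + qComm q X ⁅E, B⁆ := by
  simp only [qComm, Ring.lie_def, mul_sub, sub_mul, mul_smul_comm, smul_mul_assoc, smul_sub,
    mul_assoc]
  abel

theorem qComm_zero_right (q : S) (X : R) : qComm q X (0 : R) = 0 := by
  simp [qComm]

theorem lie_qComm_of_lie_eq_smul_sub {q : S} (hq : q ^ 2 - q ^ (-2 : ℤ) ≠ 0) {E A B H H' : R}
    (hEA : ⁅E, A⁆ = (q ^ 2 - q ^ (-2 : ℤ))⁻¹ • (H - H')) (hEB : ⁅E, B⁆ = 0)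
    (hHB : H * B = q ^ 2 • (B * H)) (hH'B : H' * B = q ^ (-2 : ℤ) • (B * H')) :
    ⁅E, qComm q A B⁆ = q • (B * H) := by
  have hq0 : q ≠ 0 := by rintro rfl; simp at hq
  rw [lie_qComm, hEA, hEB, qComm_zero_right, add_zero, qComm]
  simp only [smul_mul_assoc, sub_mul, hHB, hH'B, mul_smul_comm, mul_sub, smul_sub, smul_smul]
  have hq' : q * q ^ 2 - q⁻¹ = q * (q ^ 2 - q ^ (-2 : ℤ)) := by
    rw [zpow_neg, zpow_ofNat]
    field_simp
  match_scalars
  · calc q * ((q ^ 2 - q ^ (-2 : ℤ))⁻¹ * q ^ 2) * 1 - q⁻¹ * (q ^ 2 - q ^ (-2 : ℤ))⁻¹ * 1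
        = (q ^ 2 - q ^ (-2 : ℤ))⁻¹ * (q * q ^ 2 - q⁻¹) := by ring
      _ = q * 1 := by rw [hq', mul_left_comm, inv_mul_cancel₀ hq, mul_one]
  · rw [zpow_neg, zpow_ofNat]
    field_simp
    ring

theorem lie_qComm_of_commute {q : S} {E X Y B H : R} (hEX : ⁅E, X⁆ = q • (Y * H))
    (hEB : ⁅E, B⁆ = 0) (hHB : H * B = B * H) :
    ⁅E, qComm q X B⁆ = q • (qComm q Y B * H) := by
  rw [lie_qComm, hEX, hEB, qComm_zero_right, add_zero, qComm, qComm]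
  simp only [smul_mul_assoc, mul_smul_comm, sub_mul, mul_assoc, hHB, smul_sub]
  module

end QComm

section Conjugation

variable {S R : Type*} [Field S] [Ring R] [Algebra S R]

theorem mul_eq_smul_mul_of_conj_eq_smul {k k' x : R} {s : S} (hk : k' * k = 1)
    (h : k * x * k' = s • x) : k * x = s • (x * k) := by
  rw [← smul_mul_assoc, ← h, mul_assoc _ k', hk, mul_one]

theorem conj_eq_inv_smul_of_conj_eq_smul {k k' x : R} {s : S} (hk : k' * k = 1) (hs : s ≠ 0)
    (h : k * x * k' = s • x) : k' * x * k = s⁻¹ • x := by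
  have : s • (k' * x * k) = x := by
    calc s • (k' * x * k) = k' * (k * x * k') * k := by rw [h, mul_smul_comm, smul_mul_assoc]
      _ = x := by simp only [← mul_assoc, hk, one_mul]; rw [mul_assoc, hk, mul_one]
  rw [← this, inv_smul_smul₀ hs, this]

theorem pow_mul_eq_smul_mul_pow {k x : R} {s : S} (h : k * x = s • (x * k)) (n : ℕ) :
    k ^ n * x = s ^ n • (x * k ^ n) := by
  induction n with
  | zero => simp
  | succ n ih =>
    rw [pow_succ', mul_assoc, ih, mul_smul_comm, ← mul_assoc, h, smul_mul_assoc, smul_smul,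
      mul_assoc, ← pow_succ', ← pow_succ]

end Conjugation

section Relations

variable (F : Type) [Field F] (N : ℕ)

theorem qq_ne_zero : qq F ≠ 0 := RatFunc.X_ne_zero

theorem qq_pow_four_ne_one : qq F ^ 4 ≠ 1 := by
  intro h
  have hX : (Polynomial.X : Polynomial F) ^ 4 = 1 := by
    apply RatFunc.algebraMap_injective F
    rwa [map_pow, RatFunc.algebraMap_X, map_one]
  simpa using congrArg Polynomial.natDegree hX

theorem qq_sq_sub_zpow_neg_two_ne_zero : qq F ^ 2 - qq F ^ (-2 : ℤ) ≠ 0 := by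
  have hq := qq_ne_zero F
  rw [zpow_neg, zpow_ofNat, sub_ne_zero]
  intro h
  apply qq_pow_four_ne_one F
  field_simp at h
  linear_combination h

theorem egen_succ (i : Fin N) : egen F N (i + 1) = gen F N (Gen.e i) := by
  simp [egen, i.isLt]

theorem fgen_succ (i : Fin N) : fgen F N (i + 1) = gen F N (Gen.f i) := by
  simp [fgen, i.isLt]

theorem kgen_succ (i : Fin N) : kgen F N (i + 1) = gen F N (Gen.k i) := by
  simp [kgen, i.isLt]

theorem kinvgen_succ (i : Fin N) : kinvgen F N (i + 1) = gen F N (Gen.kinv i) := by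
  simp [kinvgen, i.isLt]

theorem exists_fin_succ_eq {a : ℕ} (ha : 1 ≤ a) (ha' : a ≤ N) : ∃ i : Fin N, (i : ℕ) + 1 = a :=
  ⟨⟨a - 1, by omega⟩, by simp only; omega⟩

theorem egen_lie_fgen_self {a : ℕ} (ha : 1 ≤ a) (ha' : a ≤ N) :
    ⁅egen F N a, fgen F N a⁆ =
      (qq F ^ 2 - qq F ^ (-2 : ℤ))⁻¹ • (kgen F N a ^ 2 - kinvgen F N a ^ 2) := by
  obtain ⟨i, rfl⟩ := exists_fin_succ_eq N ha ha'
  have h := RingQuot.mkAlgHom_rel (kk F) (UqRel.ef (F := F) i i)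
  simp only [if_pos, map_sub, map_mul, map_smul, map_pow] at h
  rw [egen_succ, fgen_succ, kgen_succ, kinvgen_succ, Ring.lie_def]
  exact h

theorem egen_lie_fgen_of_ne {a b : ℕ} (hab : a ≠ b) : ⁅egen F N a, fgen F N b⁆ = 0 := by
  by_cases ha : 1 ≤ a ∧ a ≤ N
  swap; · simp [egen, ha, Ring.lie_def]
  by_cases hb : 1 ≤ b ∧ b ≤ N
  swap; · simp [fgen, hb, Ring.lie_def]
  obtain ⟨i, rfl⟩ := exists_fin_succ_eq N ha.1 ha.2
  obtain ⟨j, rfl⟩ := exists_fin_succ_eq N hb.1 hb.2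
  have h := RingQuot.mkAlgHom_rel (kk F) (UqRel.ef (F := F) i j)
  rw [if_neg (by omega)] at h
  simp only [map_sub, map_mul, map_zero] at h
  rw [egen_succ, fgen_succ, Ring.lie_def]
  exact h

theorem kgen_mul_kinvgen {a : ℕ} (ha : 1 ≤ a) (ha' : a ≤ N) : kgen F N a * kinvgen F N a = 1 := by
  obtain ⟨i, rfl⟩ := exists_fin_succ_eq N ha ha'
  simpa [gen, kgen_succ, kinvgen_succ] using RingQuot.mkAlgHom_rel (kk F) (UqRel.kkinv (F := F) i)

theorem kinvgen_mul_kgen {a : ℕ} (ha : 1 ≤ a) (ha' : a ≤ N) : kinvgen F N a * kgen F N a = 1 := by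
  obtain ⟨i, rfl⟩ := exists_fin_succ_eq N ha ha'
  simpa [gen, kgen_succ, kinvgen_succ] using RingQuot.mkAlgHom_rel (kk F) (UqRel.kinvk (F := F) i)

theorem kgen_mul_fgen_mul_kinvgen {a : ℕ} (ha : 1 ≤ a) (ha' : a ≤ N) (b : ℕ) :
    kgen F N a * fgen F N b * kinvgen F N a = qq F ^ (-cartan a b) • fgen F N b := by
  by_cases hb : 1 ≤ b ∧ b ≤ N
  swap; · simp [fgen, hb]
  obtain ⟨i, rfl⟩ := exists_fin_succ_eq N ha ha'
  obtain ⟨j, rfl⟩ := exists_fin_succ_eq N hb.1 hb.2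
  simpa [gen, kgen_succ, fgen_succ, kinvgen_succ]
    using RingQuot.mkAlgHom_rel (kk F) (UqRel.kf (F := F) i j)

theorem kgen_sq_mul_fgen {a : ℕ} (ha : 1 ≤ a) (ha' : a ≤ N) (b : ℕ) :
    kgen F N a ^ 2 * fgen F N b = (qq F ^ (-cartan a b)) ^ 2 • (fgen F N b * kgen F N a ^ 2) :=
  pow_mul_eq_smul_mul_pow (mul_eq_smul_mul_of_conj_eq_smul (kinvgen_mul_kgen F N ha ha')
    (kgen_mul_fgen_mul_kinvgen F N ha ha' b)) 2

theorem kinvgen_sq_mul_fgen {a : ℕ} (ha : 1 ≤ a) (ha' : a ≤ N) (b : ℕ) :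
    kinvgen F N a ^ 2 * fgen F N b =
      (qq F ^ (-cartan a b))⁻¹ ^ 2 • (fgen F N b * kinvgen F N a ^ 2) :=
  pow_mul_eq_smul_mul_pow (mul_eq_smul_mul_of_conj_eq_smul (kgen_mul_kinvgen F N ha ha')
    (conj_eq_inv_smul_of_conj_eq_smul (kinvgen_mul_kgen F N ha ha')
      (zpow_ne_zero _ (qq_ne_zero F)) (kgen_mul_fgen_mul_kinvgen F N ha ha' b))) 2

end Relations

section RootVectors

variable (F : Type) [Field F] (N : ℕ)

theorem fword_succ_eq_qComm (i d : ℕ) :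
    fword F N i (d + 1) = qComm (qq F) (fword F N i d) (fgen F N (i + 1 + d)) := by
  rw [fword, qComm]

theorem cartan_self_succ (a : ℕ) : cartan a (a + 1) = -1 := by
  simp [cartan]

theorem cartan_of_add_two_le {a b : ℕ} (h : a + 2 ≤ b) : cartan a b = 0 := by
  simp only [cartan]
  rw [if_neg (by omega), if_neg (by omega)]

-- No upper bound on `d` is needed: `fgen F N j = 0` for `j > N`.
theorem egen_lie_fword_succ {i : ℕ} (hi : 1 ≤ i) (hi' : i ≤ N) (d : ℕ) :
    ⁅egen F N i, fword F N i (d + 1)⁆ = qq F • (fword F N (i + 1) d * kgen F N i ^ 2) := by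
  induction d with
  | zero =>
    rw [fword_succ_eq_qComm, fword, fword, add_zero]
    refine lie_qComm_of_lie_eq_smul_sub (qq_sq_sub_zpow_neg_two_ne_zero F)
      (egen_lie_fgen_self F N hi hi') (egen_lie_fgen_of_ne F N (by omega)) ?_ ?_
    · simpa [cartan_self_succ] using kgen_sq_mul_fgen F N hi hi' (i + 1)
    · simpa [cartan_self_succ] using kinvgen_sq_mul_fgen F N hi hi' (i + 1)
  | succ d ih =>
    rw [fword_succ_eq_qComm, fword_succ_eq_qComm, show i + 1 + (d + 1) = i + 1 + 1 + d by omega]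
    refine lie_qComm_of_commute ih (egen_lie_fgen_of_ne F N (by omega)) ?_
    simpa [cartan_of_add_two_le (show i + 2 ≤ i + 1 + 1 + d by omega)]
      using kgen_sq_mul_fgen F N hi hi' (i + 1 + 1 + d)

end RootVectors

theorem stmt2_general (F : Type) [Field F] (N : ℕ) (i b : ℕ)
    (hi : 1 ≤ i) (hib : i ≤ b - 2) (hb : b ≤ N + 1) :
    egen F N i * fij F N i b - fij F N i b * egen F N i =
      qq F • (fij F N (i + 1) b * (kgen F N i) ^ 2) := by
  obtain ⟨d, rfl⟩ : ∃ d, b = i + 2 + d := ⟨b - i - 2, by omega⟩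
  have hfij : fij F N i (i + 2 + d) = fword F N i (d + 1) := by rw [fij]; congr 1; omega
  have hfij' : fij F N (i + 1) (i + 2 + d) = fword F N (i + 1) d := by rw [fij]; congr 1; omega
  rw [hfij, hfij', ← Ring.lie_def]
  exact egen_lie_fword_succ F N hi (by omega) d

/-- for `1 ≤ i ≤ b-2`, `b ≤ N+1`:
`e_i f_{i,b} - f_{i,b} e_i = q f_{i+1,b} k_i²` in `U`. -/
theorem stmt2 (F : Type) [Field F] (N : ℕ) (hN : 1 ≤ N) (i b : ℕ)
    (hi : 1 ≤ i) (hib : i ≤ b - 2) (hb : b ≤ N + 1) :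
    egen F N i * fij F N i b - fij F N i b * egen F N i =
      qq F • (fij F N (i + 1) b * (kgen F N i) ^ 2) :=
  stmt2_general F N i b hi hib hb
end

section
/- For every weight λ, det→(D^{N+1}(λ)) = Σ_{I ∈ 𝕀} f_I · H_I(λ) in U. In particular, for every weight λ with (λ, η) = 1 - N, the left-to-right determinant det→(D^{N+1}(λ)) equals the evaluation at λ of the Shapovalov element Θ_η = Σ_{I ∈ 𝕀} f_I H_I. -/
/-!
The left-to-right determinant may be expanded along its first column even though `U` is not
commutative, because the entries of that column are the leftmost factors of every term. The first
column of `D^{N+1}(λ)` has only two nonzero entries, `f_{1,2}` and the central scalar `-h_1(λ)`,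
and both complementary minors are again of the same shape once the first row is allowed to read
`f_{c,·}` for an arbitrary start `c`. Hence the determinant satisfies a two-term recursion, which
the sum over `I ∈ 𝕀` satisfies as well by splitting according to whether `2 ∈ I`.
-/

theorem Finset.sort_insert_of_forall_lt {α : Type*} [LinearOrder α] {s : Finset α} {a : α}
    (h : ∀ b ∈ s, b < a) : (insert a s).sort = s.sort ++ [a] := by
  have hnodup : (s.sort ++ [a]).Nodup := List.nodup_append.2
    ⟨s.sort_nodup _, List.nodup_singleton a, by simpa using fun b hb => (h b hb).ne⟩
  have hset : (s.sort ++ [a]).toFinset = insert a s := by ext; simp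
  rw [← hset, List.toFinset_sort _ hnodup]
  exact List.pairwise_append.2 ⟨s.pairwise_sort _, List.pairwise_singleton _ _,
    fun b hb c hc => List.mem_singleton.1 hc ▸ (h b (by simpa using hb)).le⟩

section Hessenberg

variable {R : Type*} [Ring R]

def colDet {m : ℕ} (B : Matrix (Fin m) (Fin m) R) : R :=
  ∑ w : Equiv.Perm (Fin m),
    ((Equiv.Perm.sign w : ℤˣ) : ℤ) • ((List.finRange m).map fun j => B (w j) j).prod

theorem colDet_zero (B : Matrix (Fin 0) (Fin 0) R) : colDet B = 1 := by
  simp [colDet]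

open Equiv.Perm in
theorem colDet_succ_column_zero {m : ℕ} (B : Matrix (Fin (m + 1)) (Fin (m + 1)) R) :
    colDet B = ∑ p : Fin (m + 1),
      ((-1 : ℤ) ^ (p : ℕ)) • (B p 0 * colDet (B.submatrix p.succAbove Fin.succ)) := by
  simp only [colDet, ← List.ofFn_eq_map, List.ofFn_succ, List.prod_cons, Finset.mul_sum,
    Finset.smul_sum, ← mul_smul_comm, Matrix.submatrix_apply]
  rw [← decomposeFin.symm.sum_comp, Fintype.sum_prod_type]
  refine Fintype.sum_congr _ _ fun p => ?_
  induction p using Fin.cases with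
  | zero => simp [decomposeFin.symm_sign]
  | succ i =>
    -- reindexing the minor by `i.cycleRange` turns `succAbove` into the swap of `decomposeFin`
    conv_rhs => rw [← Equiv.sum_comp (Equiv.mulLeft i.cycleRange)]
    refine Fintype.sum_congr _ _ fun σ => ?_
    have hsign (x : R) : (-1 : R) ^ ((i : ℕ) + 1) * ((-1) ^ (i : ℕ) * x) = -x := by
      rw [← mul_assoc, ← pow_add, Odd.neg_one_pow ⟨i, by ring⟩, neg_one_mul]
    simp [decomposeFin.symm_sign, Fin.sign_cycleRange, Fin.succAbove_cycleRange, mul_assoc, hsign]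

variable {K : Type*} [CommRing K] [Algebra K R] (f : ℕ → ℕ → R) (g : ℕ → K)

def chainProd : List ℕ → R
  | a :: b :: l => f a b * chainProd (b :: l)
  | _ => 1

def hessenberg (c a m : ℕ) : Matrix (Fin m) (Fin m) R :=
  Matrix.of fun i j =>
    if (i : ℕ) ≤ j then f (if (i : ℕ) = 0 then c else a + i) (a + j + 1)
    else if (i : ℕ) = j + 1 then -algebraMap K R (g (a + i))
    else 0

def hessenbergSum (c a m : ℕ) : R :=
  ∑ S ∈ (Finset.Ioo a (a + m)).powerset,
    chainProd f (c :: (S.sort ++ [a + m])) *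
      algebraMap K R (∏ t ∈ Finset.Ioo a (a + m) \ S, g t)

theorem hessenberg_submatrix_zero (c a m : ℕ) :
    (hessenberg f g c a (m + 1)).submatrix (0 : Fin (m + 1)).succAbove Fin.succ =
      hessenberg f g (a + 1) (a + 1) m := by
  ext i j
  simp only [hessenberg, Matrix.submatrix_apply, Matrix.of_apply, Fin.succAbove_zero, Fin.val_succ]
  grind

theorem hessenberg_submatrix_one (c a m : ℕ) :
    (hessenberg f g c a (m + 2)).submatrix (1 : Fin (m + 2)).succAbove Fin.succ =
      hessenberg f g c (a + 1) (m + 1) := by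
  ext i j
  simp only [hessenberg, Matrix.submatrix_apply, Matrix.of_apply, Fin.succAbove, Fin.lt_def,
    Fin.val_castSucc, Fin.val_succ, Fin.val_one]
  grind

theorem hessenbergSum_succ_succ (c a m : ℕ) :
    hessenbergSum f g c a (m + 2) =
      algebraMap K R (g (a + 1)) * hessenbergSum f g c (a + 1) (m + 1) +
        f c (a + 1) * hessenbergSum f g (a + 1) (a + 1) (m + 1) := by
  have hIoo : Finset.Ioo a (a + (m + 2)) =
      insert (a + 1) (Finset.Ioo (a + 1) (a + 1 + (m + 1))) := by
    ext t; simp only [Finset.mem_Ioo, Finset.mem_insert]; omega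
  have hnotMem : a + 1 ∉ Finset.Ioo (a + 1) (a + 1 + (m + 1)) := by simp
  rw [hessenbergSum, hIoo, Finset.sum_powerset_insert hnotMem, hessenbergSum, hessenbergSum,
    Finset.mul_sum, Finset.mul_sum, show a + (m + 2) = a + 1 + (m + 1) by omega]
  congr 1 <;> refine Finset.sum_congr rfl fun S hS => ?_
  · have ha : a + 1 ∉ S := fun h => hnotMem (Finset.mem_powerset.1 hS h)
    rw [Finset.insert_sdiff_of_notMem _ ha, Finset.prod_insert (by simp), map_mul,
      Algebra.left_comm]
  · have hlt : ∀ b ∈ S, a + 1 ≤ b := fun b hb =>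
      (Finset.mem_Ioo.1 (Finset.mem_powerset.1 hS hb)).1.le
    rw [Finset.sort_insert _ hlt (fun h => hnotMem (Finset.mem_powerset.1 hS h)),
      Finset.insert_sdiff_insert, Finset.sdiff_insert_of_notMem hnotMem, List.cons_append,
      chainProd, mul_assoc]

theorem colDet_hessenberg (c a m : ℕ) :
    colDet (hessenberg f g c a (m + 1)) = hessenbergSum f g c a (m + 1) := by
  induction m generalizing c a with
  | zero =>
    have hempty : Finset.Ioo a (a + 1) = ∅ := by ext; simp
    simp [colDet_succ_column_zero, colDet_zero, hessenberg, hessenbergSum, chainProd, hempty]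
  | succ m ih =>
    rw [colDet_succ_column_zero, Fin.sum_univ_succ, Fin.sum_univ_succ, hessenbergSum_succ_succ]
    have h00 : hessenberg f g c a (m + 1 + 1) 0 0 = f c (a + 1) := by simp [hessenberg]
    have h10 : hessenberg f g c a (m + 1 + 1) 1 0 = -algebraMap K R (g (a + 1)) := by
      simp [hessenberg]
    have hzero (p : Fin m) : hessenberg f g c a (m + 1 + 1) p.succ.succ 0 = 0 := by
      simp [hessenberg]
    simp only [Fin.succ_zero_eq_one, hzero, zero_mul, smul_zero, Finset.sum_const_zero, add_zero,
      hessenberg_submatrix_zero, hessenberg_submatrix_one, ih, h00, h10]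
    rw [Fin.val_zero, Fin.val_one, pow_zero, pow_one, one_smul, neg_one_zsmul, neg_mul, neg_neg,
      add_comm]

end Hessenberg

theorem ldet_eq_colDet {F : Type} [Field F] {N m : ℕ} (B : Matrix (Fin m) (Fin m) (Uq F N)) :
    ldet F N B = colDet B := rfl

theorem fList_eq_chainProd (F : Type) [Field F] (N : ℕ) :
    ∀ L, fList F N L = chainProd (fij F N) L
  | a :: b :: l => by rw [fList, chainProd, fList_eq_chainProd F N (b :: l)]
  | [_] | [] => rfl

-- The shift `t ↦ h_{t-1}(λ)` is the one in `r(I) = {s - 1 : s ∉ I}`.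
theorem Dmat_eq_hessenberg (F : Type) [Field F] (N : ℕ) (lam : ℕ → ℤ) (m : ℕ) :
    Dmat F N lam (m + 2) = hessenberg (fij F N) (fun t => hval F lam (t - 1)) 1 1 (m + 1) := by
  ext i j
  simp only [Dmat, hessenberg, Matrix.of_apply]
  grind

theorem hessenbergSum_eq_sum_II (F : Type) [Field F] (N : ℕ) (hN : 1 ≤ N) (lam : ℕ → ℤ) :
    hessenbergSum (fij F N) (fun t => hval F lam (t - 1)) 1 1 N =
      ∑ I ∈ II N, fSet F N I * algebraMap (kk F) (Uq F N) (HIval F N lam I) := by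
  rw [hessenbergSum, add_comm]
  refine Finset.sum_nbij' (fun S => insert 1 (insert (N + 1) S)) (· ∩ Finset.Ioo 1 (N + 1))
    ?_ ?_ ?_ ?_ fun S hS => ?_
  all_goals simp only [II, Finset.mem_filter, Finset.mem_powerset] at *
  · grind
  · exact fun I _ => Finset.inter_subset_right
  · grind
  · grind
  have hsort : (insert 1 (insert (N + 1) S)).sort = 1 :: (S.sort ++ [N + 1]) := by
    rw [Finset.sort_insert _ (by grind) (by grind), Finset.sort_insert_of_forall_lt (by grind)]
  have hrSet :
      rSet N (insert 1 (insert (N + 1) S)) = (Finset.Ioo 1 (N + 1) \ S).image (· - 1) := by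
    rw [rSet]
    congr 1
    ext t
    simp only [Finset.mem_sdiff, Finset.mem_Icc, Finset.mem_Ioo, Finset.mem_insert]
    grind
  rw [fSet, hsort, fList_eq_chainProd, HIval, hrSet,
    Finset.prod_image fun x hx y hy hxy => by simp_all; omega]

theorem ldet_Dmat_eq_sum_II (F : Type) [Field F] (N : ℕ) (lam : ℕ → ℤ) :
    ldet F N (Dmat F N lam (N + 1)) =
      ∑ I ∈ II N, fSet F N I * algebraMap (kk F) (Uq F N) (HIval F N lam I) := by
  rcases N with _ | m
  · have hII : II 0 = {{1}} := by decide
    have hrSet : rSet 0 {1} = ∅ := by decide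
    simp [ldet, hII, fSet, fList, HIval, hrSet]
  · rw [ldet_eq_colDet, Dmat_eq_hessenberg, colDet_hessenberg,
      hessenbergSum_eq_sum_II F (m + 1) (by omega)]

theorem stmt11_general (F : Type) [Field F] (N : ℕ) :
    (∀ lam : ℕ → ℤ,
      ldet F N (Dmat F N lam (N + 1)) =
        ∑ I ∈ II N, fSet F N I * algebraMap (kk F) (Uq F N) (HIval F N lam I)) ∧
    (∀ lam : ℕ → ℤ, pairσ lam N = 1 - (N : ℤ) →
      ldet F N (Dmat F N lam (N + 1)) =
        ∑ I ∈ II N, fSet F N I * algebraMap (kk F) (Uq F N) (HIval F N lam I)) :=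
  ⟨ldet_Dmat_eq_sum_II F N, fun lam _ => ldet_Dmat_eq_sum_II F N lam⟩

/-- for every weight `λ`,
`det→(D^{N+1}(λ)) = Σ_{I ∈ 𝕀} f_I · H_I(λ)` in `U`; in particular for every `λ`
with `(λ,η) = 1-N` the left-to-right determinant equals the evaluation at `λ`
of the Shapovalov element `Θ_η = Σ_{I ∈ 𝕀} f_I H_I`. -/
theorem stmt11 (F : Type) [Field F] (N : ℕ) (hN : 1 ≤ N) :
    (∀ lam : ℕ → ℤ,
      ldet F N (Dmat F N lam (N + 1)) =
        ∑ I ∈ II N, fSet F N I * algebraMap (kk F) (Uq F N) (HIval F N lam I)) ∧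
    (∀ lam : ℕ → ℤ, pairσ lam N = 1 - (N : ℤ) →
      ldet F N (Dmat F N lam (N + 1)) =
        ∑ I ∈ II N, fSet F N I * algebraMap (kk F) (Uq F N) (HIval F N lam I)) :=
  stmt11_general F N
end

section
/- Assume N ≥ 2. Let J ⊆ {1, …, N} with 1 ∈ J and N ∈ J, set F = f_N, J₁ = J ∪ {N+1} and J₂ = (J \ {N}) ∪ {N+1}. Then in U: F f_J - v f_J F = -q f_{J₂}, and f_J F = f_{J₁}. -/
/-! The far Serre relations let `f_N` commute past every root vector `f_{a,b}` with `b < N`,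
hence past the part of `f_J` below `N`. What is left is the last factor `f_{a,N}`, and the
defining recursion `f_{a,N+1} = q f_{a,N} f_N - q⁻¹ f_N f_{a,N}` is exactly the first identity;
the second is `f_{N,N+1} = f_N`. -/

namespace Finset

variable {α : Type*} [LinearOrder α]

theorem sort_insert_of_forall_lt_s17 {s : Finset α} {b : α} (h : ∀ x ∈ s, x < b) :
    (insert b s).sort = s.sort ++ [b] := by
  refine (sortedLT_sort _).eq_of_mem_iff ?_ fun x => by simp [or_comm]
  refine List.sortedLT_iff_pairwise.2 (List.pairwise_append.2
    ⟨(sortedLT_sort s).pairwise, List.pairwise_singleton _ _, ?_⟩)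
  intro x hx y hy
  rw [List.mem_singleton.1 hy]
  exact h x ((mem_sort _).1 hx)

theorem sort_eq_dropLast_append_max' {s : Finset α} (hs : s.Nonempty) :
    s.sort = s.sort.dropLast ++ [s.max' hs] := by
  have hne : s.sort ≠ [] := by
    rw [Ne, ← List.length_eq_zero_iff, length_sort]
    exact hs.card_pos.ne'
  rw [max'_eq_sorted_last, ← List.getLast_eq_getElem hne, List.dropLast_append_getLast]

end Finset

section RootVectors

variable {F : Type} [Field F] {N : ℕ}

theorem fList_append_pair : ∀ (l : List ℕ) (a b : ℕ),
    fList F N (l ++ [a, b]) = fList F N (l ++ [a]) * fij F N a b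
  | [], a, b => by simp [fList]
  | [x], a, b => by simp [fList]
  | x :: y :: l, a, b => by
    have ih := fList_append_pair (y :: l) a b
    simp only [List.cons_append, fList] at ih ⊢
    rw [ih, mul_assoc]

theorem fSet_insert_of_forall_lt {S : Finset ℕ} {b : ℕ} (hS : S.Nonempty) (h : ∀ x ∈ S, x < b) :
    fSet F N (insert b S) = fSet F N S * fij F N (S.max' hS) b := by
  rw [fSet, fSet, Finset.sort_insert_of_forall_lt_s17 h, Finset.sort_eq_dropLast_append_max' hS,
    List.append_assoc, List.singleton_append, fList_append_pair]

theorem fij_self_succ (i : ℕ) : fij F N i (i + 1) = fgen F N i := by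
  simp [fij, fword]

theorem fij_succ_right {i j : ℕ} (h : i < j) :
    fij F N i (j + 1) =
      qq F • (fij F N i j * fgen F N j) - (qq F)⁻¹ • (fgen F N j * fij F N i j) := by
  have hd : j + 1 - i - 1 = (j - i - 1) + 1 := by omega
  have hj : i + 1 + (j - i - 1) = j := by omega
  rw [fij, fij, hd, fword, hj]

theorem fgen_mul_fij_sub_smul {i j : ℕ} (h : i < j) :
    fgen F N j * fij F N i j - vv F • (fij F N i j * fgen F N j) =
      (-qq F) • fij F N i (j + 1) := by
  have hq : qq F ≠ 0 := RatFunc.X_ne_zero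
  rw [fij_succ_right h, smul_sub, smul_smul, smul_smul, neg_mul, neg_mul, ← sq,
    mul_inv_cancel₀ hq, vv]
  simp only [neg_smul, one_smul]
  abel

theorem commute_fgen_of_add_two_le {m n : ℕ} (h : m + 2 ≤ n) :
    Commute (fgen F N m) (fgen F N n) := by
  unfold fgen
  split_ifs with hm hn
  · show _ * _ = _ * _
    simpa only [map_mul, gen] using RingQuot.mkAlgHom_rel (kk F)
      (UqRel.serre_f_far (F := F) ⟨m - 1, by omega⟩ ⟨n - 1, by omega⟩ (Or.inl (by simp; omega)))
  all_goals simp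

theorem commute_fgen_fword {n : ℕ} (i : ℕ) :
    ∀ d, i + d + 2 ≤ n → Commute (fgen F N n) (fword F N i d)
  | 0, h => (commute_fgen_of_add_two_le h).symm
  | d + 1, h => by
    have ih := commute_fgen_fword (n := n) i d (by omega)
    have hgen : Commute (fgen F N n) (fgen F N (i + 1 + d)) :=
      (commute_fgen_of_add_two_le (m := i + 1 + d) (by omega)).symm
    exact ((ih.mul_right hgen).smul_right _).sub_right ((hgen.mul_right ih).smul_right _)

theorem commute_fgen_fij {i j n : ℕ} (hij : i < j) (hjn : j < n) :
    Commute (fgen F N n) (fij F N i j) :=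
  commute_fgen_fword i (j - i - 1) (by omega)

theorem commute_fgen_fList {n : ℕ} : ∀ l : List ℕ, l.IsChain (· < ·) → (∀ x ∈ l, x < n) →
    Commute (fgen F N n) (fList F N l)
  | [], _, _ => Commute.one_right _
  | [_], _, _ => Commute.one_right _
  | a :: b :: l, hl, hn => by
    rw [List.isChain_cons_cons] at hl
    exact (commute_fgen_fij hl.1 (hn b (by simp))).mul_right
      (commute_fgen_fList (b :: l) hl.2 fun x hx => hn x (List.mem_cons_of_mem a hx))

theorem commute_fgen_fSet {n : ℕ} {S : Finset ℕ} (h : ∀ x ∈ S, x < n) :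
    Commute (fgen F N n) (fSet F N S) :=
  commute_fgen_fList _ (Finset.sortedLT_sort S).isChain fun x hx => h x ((Finset.mem_sort _).1 hx)

end RootVectors

/-- assume `N ≥ 2`. Let `J ⊆ {1,…,N}` with `1, N ∈ J`, `F = f_N`,
`J₁ = J ∪ {N+1}`, `J₂ = (J \ {N}) ∪ {N+1}`. Then
`F f_J - v f_J F = -q f_{J₂}` and `f_J F = f_{J₁}` in `U`. -/
theorem stmt17 (F : Type) [Field F] (N : ℕ) (hN : 2 ≤ N)
    (J : Finset ℕ) (hJ : J ⊆ Finset.Icc 1 N) (h1 : (1 : ℕ) ∈ J) (hNJ : N ∈ J) :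
    (fgen F N N * fSet F N J - vv F • (fSet F N J * fgen F N N) =
      (-(qq F)) • fSet F N (insert (N + 1) (J.erase N))) ∧
    (fSet F N J * fgen F N N = fSet F N (insert (N + 1) J)) := by
  have hJN : ∀ x ∈ J, x ≤ N := fun x hx => (Finset.mem_Icc.1 (hJ hx)).2
  have hJ₀ : ∀ x ∈ J.erase N, x < N := fun x hx =>
    (hJN x (Finset.mem_of_mem_erase hx)).lt_of_ne (Finset.ne_of_mem_erase hx)
  have hJ₀ne : (J.erase N).Nonempty := ⟨1, Finset.mem_erase.2 ⟨by omega, h1⟩⟩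
  set a := (J.erase N).max' hJ₀ne
  have ha : a < N := ((J.erase N).max'_lt_iff hJ₀ne).2 hJ₀
  have hfJ : fSet F N J = fSet F N (J.erase N) * fij F N a N := by
    rw [← fSet_insert_of_forall_lt hJ₀ne hJ₀, Finset.insert_erase hNJ]
  refine ⟨?_, ?_⟩
  · calc fgen F N N * fSet F N J - vv F • (fSet F N J * fgen F N N)
        = fSet F N (J.erase N) *
            (fgen F N N * fij F N a N - vv F • (fij F N a N * fgen F N N)) := by
          rw [hfJ, mul_sub, mul_smul_comm, ← mul_assoc, (commute_fgen_fSet hJ₀).eq, mul_assoc,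
            mul_assoc]
      _ = (-qq F) • fSet F N (insert (N + 1) (J.erase N)) := by
          rw [fgen_mul_fij_sub_smul ha, mul_smul_comm,
            fSet_insert_of_forall_lt hJ₀ne fun x hx => (hJ₀ x hx).trans N.lt_succ_self]
  · have hmax : J.max' ⟨N, hNJ⟩ = N := le_antisymm (J.max'_le _ _ hJN) (J.le_max' _ hNJ)
    rw [fSet_insert_of_forall_lt ⟨N, hNJ⟩ fun x hx => Nat.lt_succ_of_le (hJN x hx), hmax,
      fij_self_succ]
end
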